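/- arXiv:0805.1964 — 3 statements merged into one kernel-verified Lean document; each statement's English description precedes it below -/
import Mathlib

section
/- The counting sequence s_n(132) satisfies the Catalan recurrence: s_{n+1}(132) = Σ_{k=0}^{n} s_k(132)·s_{n−k}(132), with s_0(132) = 1. -/
open Equiv

/-- The word `w` contains the pattern `p`: some subsequence of `w` is
order-isomorphic to `p`. -/
def Contains {α β : Type*} [LT α] [LT β] {n k : ℕ} (w : Fin n → α) (p : Fin k → β) : Prop :=
  ∃ f : Fin k → Fin n, StrictMono f ∧ ∀ i j : Fin k, p i < p j ↔ w (f i) < w (f j)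

/-- The pattern 132 (written with 0-indexed values as (0,2,1)). -/
def pat132 : Fin 3 → ℕ := ![0, 2, 1]

/-- `w` avoids the pattern 132. -/
def Avoids132 {n : ℕ} (w : Equiv.Perm (Fin n)) : Prop :=
  ¬ Contains (fun i => w i) pat132

/-- Pattern containment between permutations. -/
def ContainsP {n k : ℕ} (w : Equiv.Perm (Fin n)) (p : Equiv.Perm (Fin k)) : Prop :=
  Contains (fun i => w i) (fun i => p i)

/-- `w` is (up-down) alternating: `w 0 < w 1 > w 2 < w 3 > ⋯` (0-indexed). -/
def Alternating {m : ℕ} (w : Equiv.Perm (Fin m)) : Prop :=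
  ∀ i : ℕ, ∀ h : i + 1 < m,
    (i % 2 = 0 → w ⟨i, by omega⟩ < w ⟨i + 1, h⟩) ∧
    (i % 2 = 1 → w ⟨i + 1, h⟩ < w ⟨i, by omega⟩)

/-- The even-indexed (in 1-indexed terms: `w₂, w₄, …, w₂ₙ`) entries of `w`
are order-isomorphic to `u`. -/
def OrderIsoEven {n : ℕ} (w : Equiv.Perm (Fin (2 * n + 1))) (u : Equiv.Perm (Fin n)) : Prop :=
  ∀ i j : Fin n, u i < u j ↔
    w ⟨2 * (i : ℕ) + 1, by have := i.isLt; omega⟩ < w ⟨2 * (j : ℕ) + 1, by have := j.isLt; omega⟩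

/-!
In a 132-avoiding permutation with its maximum at position `a`, every entry to the left of the
maximum exceeds every entry to the right of it (otherwise these two entries and the maximum form
a 132). By counting, the `a` left entries are then exactly the top values below the maximum, so the
permutation is a 132-avoider of length `a`, shifted up, followed by the maximum, followed by a
132-avoider of length `b` on the bottom values. Conversely, any such concatenation avoids 132,
since an occurrence cannot straddle the maximum. Summing over the position of the maximum gives
the recurrence.
-/

theorem Contains.of_subseq {α β γ : Type*} [LT α] [LT β] [LT γ] {m n k : ℕ}
    {w : Fin n → α} {w' : Fin m → γ} {p : Fin k → β} (e : Fin m → Fin n) (he : StrictMono e)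
    (hcmp : ∀ i j, w' i < w' j ↔ w (e i) < w (e j)) (h : Contains w' p) : Contains w p := by
  obtain ⟨f, hf, hp⟩ := h
  exact ⟨e ∘ f, he.comp hf, fun i j => (hp i j).trans (hcmp _ _)⟩

theorem contains_pat132_iff {α : Type*} [Preorder α] {n : ℕ} (w : Fin n → α) :
    Contains w pat132 ↔ ∃ i j k : Fin n, i < j ∧ j < k ∧ w i < w k ∧ w k < w j := by
  constructor
  · rintro ⟨f, hf, hp⟩
    exact ⟨f 0, f 1, f 2, hf (by decide), hf (by decide), (hp 0 2).1 (by decide),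
      (hp 2 1).1 (by decide)⟩
  · rintro ⟨i, j, k, hij, hjk, hik, hkj⟩
    refine ⟨![i, j, k], Fin.strictMono_iff_lt_succ.2 fun t => by fin_cases t <;> assumption,
      fun s t => ?_⟩
    have hij' := hik.trans hkj
    fin_cases s <;> fin_cases t <;>
      simp [pat132, hik, hkj, hij', hik.not_gt, hkj.not_gt, hij'.not_gt]

section Glue

variable {a b : ℕ} (u : Perm (Fin a)) (v : Perm (Fin b))

def glueFun (i : Fin (a + b + 1)) : Fin (a + b + 1) :=
  if h : (i : ℕ) < a then ⟨b + u ⟨i, h⟩, by have := (u ⟨i, h⟩).isLt; omega⟩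
  else if h' : (i : ℕ) = a then Fin.last (a + b)
  else ⟨v ⟨i - (a + 1), by omega⟩, by omega⟩

theorem glueFun_injective : Function.Injective (glueFun u v) := by
  intro i j hij
  have h := congrArg Fin.val hij
  unfold glueFun at h
  split_ifs at h <;> simp only [Fin.val_last, Fin.val_inj, add_right_inj,
    EmbeddingLike.apply_eq_iff_eq, Fin.mk.injEq] at h <;> grind

noncomputable def glue : Perm (Fin (a + b + 1)) :=
  Equiv.ofBijective _ (Finite.injective_iff_bijective.1 (glueFun_injective u v))

theorem glue_apply_of_lt {i : Fin (a + b + 1)} (hi : (i : ℕ) < a) :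
    (glue u v i : ℕ) = b + u ⟨i, hi⟩ := by
  simp [glue, glueFun, hi]

theorem glue_apply_of_eq {i : Fin (a + b + 1)} (hi : (i : ℕ) = a) :
    (glue u v i : ℕ) = a + b := by
  simp [glue, glueFun, hi]

theorem glue_apply_self : glue u v ⟨a, by omega⟩ = Fin.last (a + b) :=
  Fin.ext (glue_apply_of_eq u v rfl)

theorem glue_apply_of_gt {i : Fin (a + b + 1)} (hi : a < (i : ℕ)) :
    (glue u v i : ℕ) = v ⟨i - (a + 1), by omega⟩ := by
  simp [glue, glueFun, hi.not_gt, hi.ne']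

theorem avoids132_glue (hu : Avoids132 u) (hv : Avoids132 v) : Avoids132 (glue u v) := by
  intro h
  obtain ⟨i, j, k, hij, hjk, hik, hkj⟩ := (contains_pat132_iff _).1 h
  rw [Fin.lt_def] at hij hjk hik hkj
  rcases lt_or_ge (k : ℕ) a with hk | hk
  · have ei := glue_apply_of_lt u v (i := i) (by omega)
    have ej := glue_apply_of_lt u v (i := j) (by omega)
    have ek := glue_apply_of_lt u v hk
    exact hu ((contains_pat132_iff _).2 ⟨_, _, _, Fin.mk_lt_mk.2 hij, Fin.mk_lt_mk.2 hjk,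
      by rw [Fin.lt_def]; omega, by rw [Fin.lt_def]; omega⟩)
  rcases lt_or_ge a (i : ℕ) with hi | hi
  · have ei := glue_apply_of_gt u v hi
    have ej := glue_apply_of_gt u v (i := j) (by omega)
    have ek := glue_apply_of_gt u v (i := k) (by omega)
    exact hv ((contains_pat132_iff _).2 ⟨⟨i - (a + 1), by omega⟩, ⟨j - (a + 1), by omega⟩,
      ⟨k - (a + 1), by omega⟩, Fin.mk_lt_mk.2 (by omega),
      Fin.mk_lt_mk.2 (by omega), by rw [Fin.lt_def]; omega, by rw [Fin.lt_def]; omega⟩)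
  -- Now `i ≤ a ≤ k`: either `i` or `k` carries the maximum, or `glue i ≥ b > glue k`.
  have hj := (glue u v j).isLt
  rcases hi.lt_or_eq with hi | hi
  · rcases hk.lt_or_eq with hk | hk
    · have ei := glue_apply_of_lt u v hi
      have ek := glue_apply_of_gt u v hk
      have := (v ⟨k - (a + 1), by omega⟩).isLt
      omega
    · have := glue_apply_of_eq u v hk.symm
      omega
  · have := glue_apply_of_eq u v hi
    have := (glue u v k).isLt
    omega

end Glue

theorem Equiv.Perm.apply_lt_last_of_ne {n : ℕ} {w : Perm (Fin (n + 1))} {m i : Fin (n + 1)}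
    (hm : w m = Fin.last n) (hi : i ≠ m) : w i < Fin.last n :=
  (Fin.le_last _).lt_of_ne fun h => hi (w.injective (h.trans hm.symm))

theorem Avoids132.apply_lt_apply_of_lt_of_lt {n : ℕ} {w : Perm (Fin (n + 1))} (hw : Avoids132 w)
    {i m j : Fin (n + 1)} (hm : w m = Fin.last n) (hi : i < m) (hj : m < j) : w j < w i := by
  refine lt_of_not_ge fun hij => hw ((contains_pat132_iff _).2 ⟨i, m, j, hi, hj, ?_, ?_⟩)
  · exact hij.lt_of_ne (w.injective.ne (hi.trans hj).ne)
  · exact hm ▸ w.apply_lt_last_of_ne hm hj.ne'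

section Split

variable {a b : ℕ} {w : Perm (Fin (a + b + 1))}

theorem Avoids132.le_apply_of_lt (hw : Avoids132 w) (hmax : w ⟨a, by omega⟩ = Fin.last (a + b))
    {i : Fin (a + b + 1)} (hi : (i : ℕ) < a) : b ≤ w i := by
  have := Finset.card_le_card_of_injOn w (s := Finset.Ioi ⟨a, by omega⟩)
    (t := Finset.Iio (w i)) (fun j hj => by
      simp only [Finset.coe_Ioi, Finset.coe_Iio, Set.mem_Ioi, Set.mem_Iio] at hj ⊢
      exact hw.apply_lt_apply_of_lt_of_lt hmax hi hj) w.injective.injOn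
  simpa [Fin.card_Ioi, Fin.card_Iio] using this

theorem Avoids132.apply_lt_of_gt (hw : Avoids132 w) (hmax : w ⟨a, by omega⟩ = Fin.last (a + b))
    {j : Fin (a + b + 1)} (hj : a < (j : ℕ)) : (w j : ℕ) < b := by
  have := Finset.card_le_card_of_injOn w (s := Finset.Iic ⟨a, by omega⟩)
    (t := Finset.Ioi (w j)) (fun i hi => by
      simp only [Finset.coe_Iic, Finset.coe_Ioi, Set.mem_Iic, Set.mem_Ioi] at hi ⊢
      rcases hi.lt_or_eq with hi | hi
      · exact hw.apply_lt_apply_of_lt_of_lt hmax hi hj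
      · rw [hi, hmax]
        exact w.apply_lt_last_of_ne hmax (Fin.ne_of_gt hj)) w.injective.injOn
  simp only [Fin.card_Iic, Fin.card_Ioi] at this
  omega

noncomputable def splitLeft (hw : Avoids132 w) (hmax : w ⟨a, by omega⟩ = Fin.last (a + b)) :
    Perm (Fin a) :=
  Equiv.ofBijective (fun i => ⟨w ⟨i, by omega⟩ - b, by
      have hlt := w.apply_lt_last_of_ne hmax (i := ⟨i, by omega⟩) (Fin.ne_of_lt i.isLt)
      have hle := hw.le_apply_of_lt hmax (i := ⟨i, by omega⟩) i.isLt
      rw [Fin.lt_def, Fin.val_last] at hlt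
      omega⟩)
    (Finite.injective_iff_bijective.1 fun i j h => by
      have := hw.le_apply_of_lt hmax (i := ⟨i, by omega⟩) i.isLt
      have := hw.le_apply_of_lt hmax (i := ⟨j, by omega⟩) j.isLt
      have : w ⟨i, by omega⟩ = w ⟨j, by omega⟩ :=
        Fin.ext (by simp only [Fin.mk.injEq] at h; omega)
      simpa [Fin.ext_iff] using w.injective this)

noncomputable def splitRight (hw : Avoids132 w) (hmax : w ⟨a, by omega⟩ = Fin.last (a + b)) :
    Perm (Fin b) :=
  Equiv.ofBijective (fun j => ⟨w ⟨a + 1 + j, by omega⟩,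
      hw.apply_lt_of_gt hmax (j := ⟨a + 1 + j, by omega⟩) (by simp only; omega)⟩)
    (Finite.injective_iff_bijective.1 fun i j h => by
      have : w ⟨a + 1 + i, by omega⟩ = w ⟨a + 1 + j, by omega⟩ := Fin.ext (by simpa using h)
      simpa [Fin.ext_iff] using w.injective this)

theorem splitLeft_apply (hw : Avoids132 w) (hmax : w ⟨a, by omega⟩ = Fin.last (a + b))
    (i : Fin a) : (splitLeft hw hmax i : ℕ) = w ⟨i, by omega⟩ - b :=
  rfl

theorem splitRight_apply (hw : Avoids132 w) (hmax : w ⟨a, by omega⟩ = Fin.last (a + b))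
    (j : Fin b) : (splitRight hw hmax j : ℕ) = w ⟨a + 1 + j, by omega⟩ :=
  rfl

theorem avoids132_splitLeft (hw : Avoids132 w) (hmax : w ⟨a, by omega⟩ = Fin.last (a + b)) :
    Avoids132 (splitLeft hw hmax) := fun h =>
  hw (h.of_subseq (fun i : Fin a => ⟨i, by omega⟩) (fun _ _ h => h) fun i j => by
    have := hw.le_apply_of_lt hmax (i := ⟨i, by omega⟩) i.isLt
    have := hw.le_apply_of_lt hmax (i := ⟨j, by omega⟩) j.isLt
    simp only [Fin.lt_def, splitLeft_apply]
    omega)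

theorem avoids132_splitRight (hw : Avoids132 w) (hmax : w ⟨a, by omega⟩ = Fin.last (a + b)) :
    Avoids132 (splitRight hw hmax) := fun h =>
  hw (h.of_subseq (fun j : Fin b => ⟨a + 1 + j, by omega⟩)
    (fun x y h => Fin.mk_lt_mk.2 (by have : (x : ℕ) < y := h; omega)) fun _ _ => Iff.rfl)

theorem glue_splitLeft_splitRight (hw : Avoids132 w)
    (hmax : w ⟨a, by omega⟩ = Fin.last (a + b)) :
    glue (splitLeft hw hmax) (splitRight hw hmax) = w := by
  refine Equiv.ext fun i => Fin.ext ?_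
  rcases lt_trichotomy (i : ℕ) a with hi | hi | hi
  · have := hw.le_apply_of_lt hmax hi
    rw [glue_apply_of_lt _ _ hi, splitLeft_apply, Fin.eta]
    omega
  · rw [glue_apply_of_eq _ _ hi, show i = ⟨a, by omega⟩ from Fin.ext hi, hmax, Fin.val_last]
  · rw [glue_apply_of_gt _ _ hi, splitRight_apply]
    congr 3
    dsimp only
    omega

end Split

section RoundTrip

variable {a b : ℕ} (u : Perm (Fin a)) (v : Perm (Fin b))

theorem splitLeft_glue (hu : Avoids132 u) (hv : Avoids132 v) :
    splitLeft (avoids132_glue u v hu hv) (glue_apply_self u v) = u := by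
  refine Equiv.ext fun i => Fin.ext ?_
  rw [splitLeft_apply, glue_apply_of_lt u v i.isLt]
  simp

theorem splitRight_glue (hu : Avoids132 u) (hv : Avoids132 v) :
    splitRight (avoids132_glue u v hu hv) (glue_apply_self u v) = v := by
  refine Equiv.ext fun j => Fin.ext ?_
  rw [splitRight_apply, glue_apply_of_gt u v (by simp only; omega)]
  simp

end RoundTrip

noncomputable def avoids132MaxEquiv (a b : ℕ) :
    {w : Perm (Fin (a + b + 1)) // Avoids132 w ∧ w ⟨a, by omega⟩ = Fin.last (a + b)} ≃
      {u : Perm (Fin a) // Avoids132 u} × {v : Perm (Fin b) // Avoids132 v} where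
  toFun w := (⟨splitLeft w.2.1 w.2.2, avoids132_splitLeft w.2.1 w.2.2⟩,
    ⟨splitRight w.2.1 w.2.2, avoids132_splitRight w.2.1 w.2.2⟩)
  invFun uv := ⟨glue uv.1.1 uv.2.1, avoids132_glue _ _ uv.1.2 uv.2.2, glue_apply_self _ _⟩
  left_inv w := Subtype.ext (glue_splitLeft_splitRight w.2.1 w.2.2)
  right_inv uv := Prod.ext (Subtype.ext (splitLeft_glue _ _ uv.1.2 uv.2.2))
    (Subtype.ext (splitRight_glue _ _ uv.1.2 uv.2.2))

theorem card_avoids132_apply_eq_last {n a b : ℕ} (h : a + b = n) :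
    Nat.card {w : Perm (Fin (n + 1)) // Avoids132 w ∧ w ⟨a, by omega⟩ = Fin.last n} =
      Nat.card {u : Perm (Fin a) // Avoids132 u} * Nat.card {v : Perm (Fin b) // Avoids132 v} := by
  subst h
  rw [Nat.card_congr (avoids132MaxEquiv a b), Nat.card_prod]

theorem card_avoids132_eq_sum_card_apply_eq_last (n : ℕ) :
    Nat.card {w : Perm (Fin (n + 1)) // Avoids132 w} =
      ∑ k : Fin (n + 1), Nat.card {w : Perm (Fin (n + 1)) // Avoids132 w ∧ w k = Fin.last n} := by
  rw [← Nat.card_sigma]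
  exact Nat.card_congr
    ((sigmaFiberEquiv fun w : {w // Avoids132 w} => w.1.symm (Fin.last n)).symm.trans
      (sigmaCongrRight fun _ => (subtypeSubtypeEquivSubtypeInter Avoids132 _).trans
        (subtypeEquivRight fun w : Perm (Fin (n + 1)) =>
          and_congr_right' (w.symm_apply_eq.trans eq_comm))))

/-- the Catalan recurrence for `s n = s_n(132)`. -/
theorem stmt1 :
    Nat.card {w : Equiv.Perm (Fin 0) // Avoids132 w} = 1 ∧
    ∀ n : ℕ,
      Nat.card {w : Equiv.Perm (Fin (n + 1)) // Avoids132 w} =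
        ∑ k ∈ Finset.range (n + 1),
          Nat.card {w : Equiv.Perm (Fin k) // Avoids132 w} *
            Nat.card {w : Equiv.Perm (Fin (n - k)) // Avoids132 w} := by
  refine ⟨Nat.card_eq_one_iff_unique.2 ⟨inferInstance, ⟨⟨1, fun ⟨f, _⟩ => (f 0).elim0⟩⟩⟩,
    fun n => ?_⟩
  rw [card_avoids132_eq_sum_card_apply_eq_last, ← Fin.sum_univ_eq_sum_range]
  exact Finset.sum_congr rfl fun k _ => card_avoids132_apply_eq_last (by omega)
end

section
/- Let φ: S_n(132) → A_{2n+1}(132) be the bijection characterized by: the even-indexed entries of φ(w) are order-isomorphic to w. If w ∈ S_n(132) contains a 132-avoiding pattern p ∈ S_k(132), then φ(w) contains φ(p) ∈ A_{2k+1}(132). -/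
open Equiv

/-!
In an alternating 132-avoiding permutation `w` of length `2n+1` the relative order of all
entries is forced by the order `u` of the peaks `w (2i+1)`: the valleys `w (2t)` decrease, and
peak `i` lies below valley `t` exactly when `t < i` and `u i < u t`, since anything else creates
a 132. So each comparison in `φ(u)` is the same combination of index comparisons and
`u`-comparisons (`PhiLT`). An occurrence `f` of `p` in `u` therefore lifts to an occurrence of
`φ(p)` in `φ(u)`: valley and peak `t` go to valley and peak `f t`, the last valley to the last
valley.
-/

open Set Function

-- The value `n` off the domain sends index `k` to `n`, i.e. last valley to last valley.
def extendNat {k n : ℕ} (f : Fin k → Fin n) (t : ℕ) : ℕ :=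
  if h : t < k then f ⟨t, h⟩ else n

section extendNat

variable {k n m : ℕ} {s t : ℕ}

theorem extendNat_of_lt (f : Fin k → Fin n) (h : t < k) : extendNat f t = f ⟨t, h⟩ := dif_pos h

theorem extendNat_of_le (f : Fin k → Fin n) (h : k ≤ t) : extendNat f t = n :=
  dif_neg (Nat.not_lt.2 h)

@[simp]
theorem extendNat_val (f : Fin k → Fin n) (i : Fin k) : extendNat f i = f i :=
  extendNat_of_lt f i.isLt

theorem extendNat_lt_iff (f : Fin k → Fin n) : extendNat f t < n ↔ t < k := by
  by_cases h : t < k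
  · simp [extendNat_of_lt f h, h]
  · simp [extendNat_of_le f (Nat.not_lt.1 h), h]

theorem extendNat_le (f : Fin k → Fin n) (t : ℕ) : extendNat f t ≤ n := by
  by_cases h : t < k
  · exact ((extendNat_lt_iff f).2 h).le
  · exact (extendNat_of_le f (Nat.not_lt.1 h)).le

theorem extendNat_comp (g : Fin n → Fin m) (f : Fin k → Fin n) (t : ℕ) :
    extendNat g (extendNat f t) = extendNat (g ∘ f) t := by
  by_cases h : t < k
  · simp [extendNat_of_lt _ h]
  · rw [extendNat_of_le f (Nat.not_lt.1 h), extendNat_of_le g le_rfl,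
      extendNat_of_le _ (Nat.not_lt.1 h)]

theorem extendNat_ne {f : Fin k → Fin n} (hf : Injective f) (hs : s < k) (ht : t < k)
    (hst : s ≠ t) : extendNat f s ≠ extendNat f t := by
  rw [extendNat_of_lt f hs, extendNat_of_lt f ht, Ne, Fin.val_inj, hf.eq_iff]
  exact fun h => hst (congrArg Fin.val h)

theorem extendNat_lt_extendNat_iff {f : Fin k → Fin n} {g : Fin k → Fin m}
    (h : ∀ i j, f i < f j ↔ g i < g j) :
    extendNat f s < extendNat f t ↔ extendNat g s < extendNat g t := by
  by_cases hsk : s < k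
  · by_cases htk : t < k
    · simpa [extendNat_of_lt _ hsk, extendNat_of_lt _ htk] using h ⟨s, hsk⟩ ⟨t, htk⟩
    · rw [extendNat_of_le f (Nat.not_lt.1 htk), extendNat_of_le g (Nat.not_lt.1 htk),
        extendNat_lt_iff, extendNat_lt_iff]
  · rw [extendNat_of_le f (Nat.not_lt.1 hsk), extendNat_of_le g (Nat.not_lt.1 hsk)]
    simp only [not_lt.2 (extendNat_le _ t)]

theorem StrictMono.strictMonoOn_extendNat {f : Fin k → Fin n} (hf : StrictMono f) :
    StrictMonoOn (extendNat f) (Iic k) := by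
  intro s _ t ht hst
  have hsk : s < k := lt_of_lt_of_le hst ht
  by_cases htk : t < k
  · rw [extendNat_of_lt f hsk, extendNat_of_lt f htk]
    exact hf (Fin.mk_lt_mk.2 hst)
  · rw [extendNat_of_le f (Nat.not_lt.1 htk)]
    exact (extendNat_lt_iff f).2 hsk

end extendNat

theorem contains_pat132 {m : ℕ} {α : Type*} [Preorder α] {w : Fin m → α} {a b c : Fin m}
    (hab : a < b) (hbc : b < c) (hac : w a < w c) (hcb : w c < w b) : Contains w pat132 := by
  refine ⟨![a, b, c], Fin.strictMono_iff_lt_succ.2 fun i => ?_, fun i j => ?_⟩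
  · fin_cases i
    exacts [hab, hbc]
  · fin_cases i <;> fin_cases j <;> simp [pat132, hac, hcb, hac.trans hcb, hac.not_gt, hcb.not_gt,
      (hac.trans hcb).not_gt]

section Patterns

variable {m n : ℕ} {a b c t i j : ℕ}

theorem Avoids132.extendNat_lt_of_lt {w : Perm (Fin m)} (hw : Avoids132 w) (hab : a < b)
    (hbc : b < c) (hc : c < m) (hcb : extendNat w c < extendNat w b) :
    extendNat w c < extendNat w a := by
  refine lt_of_not_ge fun hac => hw ?_
  have hac := lt_of_le_of_ne hac (extendNat_ne w.injective (by omega) hc (by omega))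
  simp only [extendNat_of_lt w hc, extendNat_of_lt w (show a < m by omega),
    extendNat_of_lt w (show b < m by omega)] at hac hcb
  exact contains_pat132 (Fin.mk_lt_mk.2 hab) (Fin.mk_lt_mk.2 hbc) hac hcb

theorem Alternating.extendNat_even_lt {w : Perm (Fin m)} (hw : Alternating w)
    (ht : 2 * t + 1 < m) : extendNat w (2 * t) < extendNat w (2 * t + 1) := by
  rw [extendNat_of_lt w (show 2 * t < m by omega), extendNat_of_lt w ht]
  exact (hw (2 * t) ht).1 (by omega)

theorem Alternating.extendNat_even_succ_lt {w : Perm (Fin m)} (hw : Alternating w)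
    (ht : 2 * t + 2 < m) : extendNat w (2 * t + 2) < extendNat w (2 * t + 1) := by
  rw [extendNat_of_lt w ht, extendNat_of_lt w (show 2 * t + 1 < m by omega)]
  exact (hw (2 * t + 1) ht).2 (by omega)

theorem OrderIsoEven.extendNat_odd_lt_iff {w : Perm (Fin (2 * n + 1))} {u : Perm (Fin n)}
    (hw : OrderIsoEven w u) (hi : i < n) (hj : j < n) :
    extendNat w (2 * i + 1) < extendNat w (2 * j + 1) ↔ extendNat u i < extendNat u j := by
  rw [extendNat_of_lt w (show 2 * i + 1 < 2 * n + 1 by omega),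
    extendNat_of_lt w (show 2 * j + 1 < 2 * n + 1 by omega), extendNat_of_lt u hi,
    extendNat_of_lt u hj]
  exact (hw ⟨i, hi⟩ ⟨j, hj⟩).symm

end Patterns

section AlternatingAvoider

variable {n : ℕ} {w : Perm (Fin (2 * n + 1))} {u : Perm (Fin n)} {i t : ℕ}

theorem valley_strictAntiOn (halt : Alternating w) (hav : Avoids132 w) :
    StrictAntiOn (fun t => extendNat w (2 * t)) (Iic n) :=
  strictAntiOn_Iic_of_succ_lt fun s hs =>
    hav.extendNat_lt_of_lt (b := 2 * s + 1) (by omega) (by simp; omega) (by simp; omega)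
      (halt.extendNat_even_succ_lt (by omega))

theorem peak_lt_valley_iff (halt : Alternating w) (hav : Avoids132 w) (hoi : OrderIsoEven w u)
    (hi : i < n) (ht : t ≤ n) :
    extendNat w (2 * i + 1) < extendNat w (2 * t) ↔ t < i ∧ extendNat u i < extendNat u t := by
  constructor
  · intro h
    have hti : t < i := by
      by_contra! hit
      rcases hit.eq_or_lt with rfl | hit
      · exact (halt.extendNat_even_lt (by omega)).not_gt h
      · have hvalley : extendNat w (2 * t) ≤ extendNat w (2 * i + 2) :=
          (valley_strictAntiOn halt hav).antitoneOn (by simp; omega) (by simpa using ht) hit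
        exact (hvalley.trans_lt (halt.extendNat_even_succ_lt (by omega))).not_gt h
    refine ⟨hti, lt_of_not_ge fun hut => h.not_gt ?_⟩
    have hut := hut.lt_of_ne (extendNat_ne u.injective (by omega) hi hti.ne)
    exact (halt.extendNat_even_lt (by omega)).trans
      ((hoi.extendNat_odd_lt_iff (by omega) hi).2 hut)
  · rintro ⟨hti, hut⟩
    exact hav.extendNat_lt_of_lt (b := 2 * t + 1) (by omega) (by omega) (by omega)
      ((hoi.extendNat_odd_lt_iff hi (by omega)).2 hut)

end AlternatingAvoider

-- `PhiLT (extendNat u) a b` says that position `a` of `φ(u)` holds a smaller entry than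
-- position `b`; even positions are valleys and odd ones peaks.
def PhiLT (U : ℕ → ℕ) (a b : ℕ) : Prop :=
  if a % 2 = 0 then
    if b % 2 = 0 then b / 2 < a / 2 else ¬(a / 2 < b / 2 ∧ U (b / 2) < U (a / 2))
  else
    if b % 2 = 0 then b / 2 < a / 2 ∧ U (a / 2) < U (b / 2) else U (a / 2) < U (b / 2)

section PhiLT

variable {U : ℕ → ℕ} {s t : ℕ}

@[simp]
theorem phiLT_even_even : PhiLT U (2 * s) (2 * t) ↔ t < s := by simp [PhiLT]

@[simp]
theorem phiLT_even_odd : PhiLT U (2 * s) (2 * t + 1) ↔ ¬(s < t ∧ U t < U s) := by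
  simp [PhiLT, Nat.mul_add_div]

@[simp]
theorem phiLT_odd_even : PhiLT U (2 * s + 1) (2 * t) ↔ t < s ∧ U s < U t := by
  simp [PhiLT, Nat.mul_add_div]

@[simp]
theorem phiLT_odd_odd : PhiLT U (2 * s + 1) (2 * t + 1) ↔ U s < U t := by
  simp [PhiLT, Nat.mul_add_div]

theorem phiLT_map {V σ : ℕ → ℕ} {k a b : ℕ} (hσ : StrictMonoOn σ (Iic k))
    (hV : ∀ s ≤ k, ∀ t ≤ k, V (σ s) < V (σ t) ↔ U s < U t) (ha : a < 2 * k + 1)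
    (hb : b < 2 * k + 1) :
    PhiLT V (2 * σ (a / 2) + a % 2) (2 * σ (b / 2) + b % 2) ↔ PhiLT U a b := by
  obtain ⟨s, rfl | rfl⟩ := Nat.even_or_odd' a <;> obtain ⟨t, rfl | rfl⟩ := Nat.even_or_odd' b <;>
    simp [Nat.mul_add_div, hσ.lt_iff_lt, hV, show s ≤ k by omega, show t ≤ k by omega]

end PhiLT

theorem extendNat_lt_iff_phiLT {n a b : ℕ} {w : Perm (Fin (2 * n + 1))} {u : Perm (Fin n)}
    (halt : Alternating w) (hav : Avoids132 w) (hoi : OrderIsoEven w u) (ha : a < 2 * n + 1)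
    (hb : b < 2 * n + 1) : extendNat w a < extendNat w b ↔ PhiLT (extendNat u) a b := by
  obtain ⟨s, rfl | rfl⟩ := Nat.even_or_odd' a <;> obtain ⟨t, rfl | rfl⟩ := Nat.even_or_odd' b
  · rw [phiLT_even_even]
    exact (valley_strictAntiOn halt hav).lt_iff_gt (by simp; omega) (by simp; omega)
  · rw [phiLT_even_odd, ← (extendNat_ne w.injective ha hb (by omega)).le_iff_lt, ← not_lt,
      peak_lt_valley_iff halt hav hoi (by omega) (by omega)]
  · rw [phiLT_odd_even]
    exact peak_lt_valley_iff halt hav hoi (by omega) (by omega)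
  · rw [phiLT_odd_odd]
    exact hoi.extendNat_odd_lt_iff (by omega) (by omega)

theorem lt_iff_phiLT {n : ℕ} {w : Perm (Fin (2 * n + 1))} {u : Perm (Fin n)}
    (halt : Alternating w) (hav : Avoids132 w) (hoi : OrderIsoEven w u) (a b : Fin (2 * n + 1)) :
    w a < w b ↔ PhiLT (extendNat u) a b := by
  simpa using extendNat_lt_iff_phiLT halt hav hoi a.isLt b.isLt

def posMap {k n : ℕ} (f : Fin k → Fin n) (a : Fin (2 * k + 1)) : Fin (2 * n + 1) :=
  ⟨2 * extendNat f (a / 2) + a % 2, by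
    rcases Nat.mod_two_eq_zero_or_one a with h | h
    · have := extendNat_le f (a / 2)
      omega
    · have := (extendNat_lt_iff f).2 (show a / 2 < k by omega)
      omega⟩

theorem StrictMono.posMap {k n : ℕ} {f : Fin k → Fin n} (hf : StrictMono f) :
    StrictMono (posMap f) := by
  intro a b hab
  change 2 * extendNat f (a / 2) + a % 2 < 2 * extendNat f (b / 2) + b % 2
  rcases (Nat.div_le_div_right (c := 2) (Fin.lt_def.1 hab).le).lt_or_eq with h | h
  · have := hf.strictMonoOn_extendNat (by simp; omega) (by simp; omega) h
    omega
  · rw [h]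
    omega

theorem stmt11_general (n k : ℕ) (u : Equiv.Perm (Fin n)) (p : Equiv.Perm (Fin k))
    (φu : Equiv.Perm (Fin (2 * n + 1)))
    (hφu : Alternating φu ∧ Avoids132 φu ∧ OrderIsoEven φu u)
    (φp : Equiv.Perm (Fin (2 * k + 1)))
    (hφp : Alternating φp ∧ Avoids132 φp ∧ OrderIsoEven φp p)
    (hcont : ContainsP u p) :
    ContainsP φu φp := by
  obtain ⟨f, hf, hpf⟩ := hcont
  have hupf : ∀ s ≤ k, ∀ t ≤ k, extendNat u (extendNat f s) < extendNat u (extendNat f t) ↔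
      extendNat p s < extendNat p t := fun s _ t _ => by
    rw [extendNat_comp, extendNat_comp]
    exact (extendNat_lt_extendNat_iff hpf).symm
  refine ⟨posMap f, hf.posMap, fun a b => ?_⟩
  rw [lt_iff_phiLT hφp.1 hφp.2.1 hφp.2.2, lt_iff_phiLT hφu.1 hφu.2.1 hφu.2.2]
  exact (phiLT_map hf.strictMonoOn_extendNat hupf a.isLt b.isLt).symm

/-- if `u ∈ S_n(132)` contains the pattern `p ∈ S_k(132)`, then
`φ(u)` contains `φ(p)`, where `φ` is characterized by the even-indexed entries
of `φ(w)` being order-isomorphic to `w`. -/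
theorem stmt11 (n k : ℕ) (u : Equiv.Perm (Fin n)) (p : Equiv.Perm (Fin k))
    (hu : Avoids132 u) (hp : Avoids132 p)
    (φu : Equiv.Perm (Fin (2 * n + 1)))
    (hφu : Alternating φu ∧ Avoids132 φu ∧ OrderIsoEven φu u)
    (φp : Equiv.Perm (Fin (2 * k + 1)))
    (hφp : Alternating φp ∧ Avoids132 φp ∧ OrderIsoEven φp p)
    (hcont : ContainsP u p) :
    ContainsP φu φp :=
  stmt11_general n k u p φu hφu φp hφp hcont
end

section
/- Let φ: S_n(132) → A_{2n+1}(132) be the bijection characterized by the even-indexed entries of φ(w) being order-isomorphic to w. Suppose φ(w) contains a pattern q, and q contains an instance of a pattern p using no left-to-right minima of q. Then w contains p. -/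
open Equiv

/-! The entries of `φ(w)` in odd positions `1, 3, 5, …` (1-indexed; the code counts from 0, so
these are its even positions) are left-to-right minima: an earlier smaller entry would form a 132
with the peak immediately before. An occurrence of `q` in `φ(w)` maps non-left-to-right minima of
`q` to non-left-to-right minima of `φ(w)`, so an instance of `p` avoiding the left-to-right minima
of `q` lands in the even positions of `φ(w)`, whose entries are order-isomorphic to `w`. -/

def IsLeftToRightMin {α : Type*} [LT α] {m : ℕ} (q : Fin m → α) (i : Fin m) : Prop :=
  ∀ j < i, q i < q j

lemma Avoids132.false_of_occurrence {n : ℕ} {w : Perm (Fin n)} (hw : Avoids132 w) {i j k : Fin n}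
    (hij : i < j) (hjk : j < k) (hik : w i < w k) (hkj : w k < w j) : False := by
  refine hw ⟨![i, j, k], ?_, ?_⟩
  · simp [Fin.strictMono_iff_lt_succ, Fin.forall_fin_two, hij, hjk]
  · have hij' := hik.trans hkj
    intro a b
    fin_cases a <;> fin_cases b <;> simp [pat132, hik, hkj, hij', hik.le, hkj.le, hij'.le]

lemma Alternating.isLeftToRightMin_of_even {N : ℕ} {v : Perm (Fin N)} (halt : Alternating v)
    (hav : Avoids132 v) {t : Fin N} (ht : (t : ℕ) % 2 = 0) : IsLeftToRightMin v t := by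
  intro s hst
  have hst' : (s : ℕ) < t := hst
  set b : Fin N := ⟨t - 1, by omega⟩
  have hpeak : v t < v b := by
    have := (halt (t - 1) (by omega)).2 (by omega)
    rwa [show (⟨t - 1 + 1, _⟩ : Fin N) = t from Fin.ext (by simp; omega)] at this
  by_contra! hle
  have hlt : v s < v t := lt_of_le_of_ne hle (v.injective.ne hst.ne)
  rcases (show s < b ∨ s = b from by simp only [Fin.lt_def, Fin.ext_iff, b]; omega) with hsb | hsb
  · exact hav.false_of_occurrence hsb (Fin.lt_def.2 (by simp [b]; omega)) hlt hpeak
  · exact lt_asymm (hsb ▸ hlt) hpeak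

lemma IsLeftToRightMin.of_embedding {α β : Type*} [LT α] [LT β] {m N : ℕ}
    {v : Fin N → α} {q : Fin m → β} {g : Fin m → Fin N} (hg : StrictMono g)
    (hiso : ∀ i j, q i < q j ↔ v (g i) < v (g j)) {a : Fin m}
    (ha : IsLeftToRightMin v (g a)) : IsLeftToRightMin q a :=
  fun j hj => (hiso a j).2 (ha (g j) (hg hj))

lemma containsP_of_odd_positions {n k : ℕ} {v : Perm (Fin (2 * n + 1))} {w : Perm (Fin n)}
    (hiso : OrderIsoEven v w) {p : Perm (Fin k)} {h : Fin k → Fin (2 * n + 1)}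
    (hh : StrictMono h) (hodd : ∀ i, (h i : ℕ) % 2 = 1)
    (hp : ∀ i j, p i < p j ↔ v (h i) < v (h j)) : ContainsP w p := by
  have hlt : ∀ i, (h i : ℕ) / 2 < n := fun i => by have := (h i).isLt; have := hodd i; omega
  have hpos : ∀ i, (⟨2 * ((h i : ℕ) / 2) + 1, by have := hlt i; omega⟩ : Fin (2 * n + 1)) = h i :=
    fun i => Fin.ext (by have := hodd i; simp; omega)
  refine ⟨fun i => ⟨(h i : ℕ) / 2, hlt i⟩, fun i j hij => ?_, fun i j => ?_⟩
  · have : (h i : ℕ) < h j := hh hij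
    have := hodd i; have := hodd j
    simp only [Fin.mk_lt_mk]; omega
  · rw [hp, hiso, hpos, hpos]

theorem stmt12_general (n m k : ℕ) (w : Equiv.Perm (Fin n))
    (φw : Equiv.Perm (Fin (2 * n + 1)))
    (hφ : Alternating φw ∧ Avoids132 φw ∧ OrderIsoEven φw w)
    (q : Equiv.Perm (Fin m)) (p : Equiv.Perm (Fin k))
    (hq : ContainsP φw q)
    (hpq : ∃ f : Fin k → Fin m, StrictMono f ∧
      (∀ i j : Fin k, p i < p j ↔ q (f i) < q (f j)) ∧
      ∀ i : Fin k, ¬ (∀ j : Fin m, j < f i → q (f i) < q j)) :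
    ContainsP w p := by
  obtain ⟨halt, hav, hiso⟩ := hφ
  obtain ⟨g, hg, hgq⟩ := hq
  obtain ⟨f, hf, hfp, hnotmin⟩ := hpq
  have hodd : ∀ i, (g (f i) : ℕ) % 2 = 1 := fun i => by
    by_contra heven
    exact hnotmin i <|
      (halt.isLeftToRightMin_of_even hav (by omega)).of_embedding hg hgq
  exact containsP_of_odd_positions hiso (hg.comp hf) hodd fun i j => (hfp i j).trans (hgq _ _)

/-- if `φ(w)` contains a pattern `q`, and `q` contains an
instance of `p` using no left-to-right minima of `q`, then `w` contains `p`. -/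
theorem stmt12 (n m k : ℕ) (w : Equiv.Perm (Fin n)) (hw : Avoids132 w)
    (φw : Equiv.Perm (Fin (2 * n + 1)))
    (hφ : Alternating φw ∧ Avoids132 φw ∧ OrderIsoEven φw w)
    (q : Equiv.Perm (Fin m)) (p : Equiv.Perm (Fin k))
    (hq : ContainsP φw q)
    (hpq : ∃ f : Fin k → Fin m, StrictMono f ∧
      (∀ i j : Fin k, p i < p j ↔ q (f i) < q (f j)) ∧
      ∀ i : Fin k, ¬ (∀ j : Fin m, j < f i → q (f i) < q j)) :
    ContainsP w p :=
  stmt12_general n m k w φw hφ q p hq hpq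
end
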